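/- Let r_req, r_data, r_think, r_break, r_reset be nonnegative reals and let v : ℝ → ℝ⁶ be differentiable with v'(t) = f(v(t)) for all t ≥ 0, where f is the client/server drift vector field. If all six coordinates of v(0) are nonnegative, then all six coordinates of v(t) are nonnegative for every t ≥ 0; that is, the nonnegative orthant ℝ≥0⁶ is forward invariant for the fluid approximation. -/

import Mathlib

/-!
Let `E(t) = ∑ᵢ min (vᵢ t) 0 ^ 2` be the squared distance from `v t` to the orthant. If `x⁺` is the
projection of `x` onto the orthant, then `f x⁺` points inward in every coordinate where `x` is
negative (quasi-positivity), and Lipschitz continuity controls `f x - f x⁺` by `K ‖x - x⁺‖`.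
Together they give `E' ≤ 2 K E`, so `E ≡ 0` by Grönwall since `E 0 = 0`. The client/server drift
is Lipschitz, being built from coordinates and minima of coordinates, and quasi-positive when the
rates are nonnegative.
-/

/-- The two-stage client/server drift vector field on `ℝ⁶`; coordinates
`x 0, …, x 5` are the counts of Client, Client_waiting, Client_think,
Server, Server_get, Server_broken. -/
noncomputable def csDrift (rreq rdata rthink rbreak rreset : ℝ)
    (x : EuclideanSpace ℝ (Fin 6)) : EuclideanSpace ℝ (Fin 6) :=
  WithLp.toLp 2 ![-rreq * min (x 0) (x 3) + rthink * x 2,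
    rreq * min (x 0) (x 3) - rdata * min (x 1) (x 4),
    rdata * min (x 1) (x 4) - rthink * x 2,
    -rreq * min (x 0) (x 3) - rbreak * x 3 + rdata * min (x 1) (x 4) + rreset * x 5,
    rreq * min (x 0) (x 3) - rdata * min (x 1) (x 4),
    rbreak * x 3 - rreset * x 5]

open Real Set Filter Topology
open scoped RealInnerProductSpace

theorem hasDerivAt_min_zero_sq (a : ℝ) :
    HasDerivAt (fun x : ℝ => min x 0 ^ 2) (2 * min a 0) a := by
  rcases lt_trichotomy a 0 with ha | rfl | ha
  · have hsq : (fun x : ℝ => min x 0 ^ 2) =ᶠ[𝓝 a] fun x => x ^ 2 := by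
      filter_upwards [Iio_mem_nhds ha] with x hx
      rw [min_eq_left hx.le]
    rw [min_eq_left ha.le]
    simpa using (hasDerivAt_pow 2 a).congr_of_eventuallyEq hsq
  · rw [hasDerivAt_iff_isLittleO_nhds_zero]
    refine Asymptotics.IsBigO.trans_isLittleO ?_ (Asymptotics.isLittleO_pow_id one_lt_two)
    refine Asymptotics.IsBigO.of_bound 1 (Eventually.of_forall fun x => ?_)
    rcases le_total x 0 with hx | hx <;> simp [hx]
  · have hzero : (fun x : ℝ => min x 0 ^ 2) =ᶠ[𝓝 a] fun _ => 0 := by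
      filter_upwards [Ioi_mem_nhds ha] with x hx
      simp [(mem_Ioi.1 hx).le]
    rw [min_eq_right ha.le, mul_zero]
    exact (hasDerivAt_const a 0).congr_of_eventuallyEq hzero

theorem le_zero_of_hasDerivAt_le_mul {E E' : ℝ → ℝ} {K a : ℝ}
    (hE : ∀ t, a ≤ t → HasDerivAt E (E' t) t) (hE' : ∀ t, a ≤ t → E' t ≤ K * E t)
    (ha : E a ≤ 0) {t : ℝ} (ht : a ≤ t) : E t ≤ 0 := by
  have := le_gronwallBound_of_liminf_deriv_right_le (δ := 0) (ε := 0) (b := t)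
    (fun s hs => (hE s hs.1).continuousAt.continuousWithinAt)
    (fun s hs _ hr => (hE s hs.1).hasDerivWithinAt.liminf_right_slope_le hr) ha
    (fun s hs => by simpa using hE' s hs.1) t ⟨ht, le_rfl⟩
  simpa [gronwallBound_ε0_δ0] using this

theorem EuclideanSpace.norm_le_sqrt_card_mul {ι : Type*} [Fintype ι] {u : EuclideanSpace ℝ ι}
    {C : ℝ} (hC : 0 ≤ C) (hu : ∀ i, |u i| ≤ C) : ‖u‖ ≤ √(Fintype.card ι) * C := by
  rw [← sqrt_sq hC, ← sqrt_mul (Nat.cast_nonneg _), EuclideanSpace.norm_eq]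
  gcongr
  calc ∑ i, ‖u i‖ ^ 2 ≤ ∑ _i : ι, C ^ 2 := Finset.sum_le_sum fun i _ => by
        simpa using sq_le_sq' (abs_le.1 (hu i)).1 (abs_le.1 (hu i)).2
    _ = Fintype.card ι * C ^ 2 := by simp

theorem abs_mul_sub_mul_le (c : ℝ) {a b δ : ℝ} (h : |a - b| ≤ δ) : |c * a - c * b| ≤ |c| * δ := by
  rw [← mul_sub, abs_mul]
  exact mul_le_mul_of_nonneg_left h (abs_nonneg c)

section Orthant

variable {ι : Type*}

def minZero (x : EuclideanSpace ℝ ι) : EuclideanSpace ℝ ι :=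
  WithLp.toLp 2 fun i => min (x i) 0

@[simp]
theorem minZero_apply (x : EuclideanSpace ℝ ι) (i : ι) : minZero x i = min (x i) 0 := rfl

theorem minZero_eq_zero_iff {x : EuclideanSpace ℝ ι} : minZero x = 0 ↔ ∀ i, 0 ≤ x i := by
  simp [PiLp.ext_iff]

theorem sub_minZero_apply_nonneg (x : EuclideanSpace ℝ ι) (i : ι) : 0 ≤ (x - minZero x) i := by
  rcases le_total (x i) 0 with h | h <;> simp [h]

def QuasiPositive (f : EuclideanSpace ℝ ι → EuclideanSpace ℝ ι) : Prop :=
  ∀ x : EuclideanSpace ℝ ι, (∀ j, 0 ≤ x j) → ∀ i, x i = 0 → 0 ≤ f x i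

variable [Fintype ι]

theorem norm_minZero_sq (x : EuclideanSpace ℝ ι) :
    ‖minZero x‖ ^ 2 = ∑ i, min (x i) 0 ^ 2 := by
  simp [EuclideanSpace.real_norm_sq_eq]

theorem inner_minZero (x y : EuclideanSpace ℝ ι) :
    ⟪minZero x, y⟫ = ∑ i, min (x i) 0 * y i := by
  simp [PiLp.inner_apply, mul_comm]

theorem HasDerivAt.norm_minZero_sq {v : ℝ → EuclideanSpace ℝ ι} {v' : EuclideanSpace ℝ ι} {t : ℝ}
    (hv : HasDerivAt v v' t) :
    HasDerivAt (fun s => ‖minZero (v s)‖ ^ 2) (2 * ⟪minZero (v t), v'⟫) t := by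
  simp only [_root_.norm_minZero_sq, inner_minZero, Finset.mul_sum, ← mul_assoc]
  refine HasDerivAt.fun_sum fun i _ => (hasDerivAt_min_zero_sq _).comp t ?_
  exact (EuclideanSpace.proj i : EuclideanSpace ℝ ι →L[ℝ] ℝ).hasFDerivAt.comp_hasDerivAt t hv

namespace QuasiPositive

variable {f : EuclideanSpace ℝ ι → EuclideanSpace ℝ ι} {K : NNReal}

theorem inner_minZero_le (hqp : QuasiPositive f) (hf : LipschitzWith K f)
    (x : EuclideanSpace ℝ ι) : ⟪minZero x, f x⟫ ≤ K * ‖minZero x‖ ^ 2 := by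
  set n := minZero x
  have hboundary : ⟪n, f (x - n)⟫ ≤ 0 := by
    rw [inner_minZero]
    refine Finset.sum_nonpos fun i _ => ?_
    rcases le_total (x i) 0 with h | h
    · refine mul_nonpos_of_nonpos_of_nonneg (min_le_right _ _)
        (hqp _ (sub_minZero_apply_nonneg x) i ?_)
      simp [h]
    · simp [h]
  calc ⟪n, f x⟫ = ⟪n, f (x - n)⟫ + ⟪n, f x - f (x - n)⟫ := by
        rw [← inner_add_right, add_sub_cancel]
    _ ≤ 0 + ‖n‖ * (K * ‖x - (x - n)‖) := by
      gcongr
      exact (real_inner_le_norm _ _).trans (by gcongr; exact hf.norm_sub_le _ _)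
    _ = K * ‖n‖ ^ 2 := by rw [sub_sub_cancel]; ring

theorem apply_nonneg_of_hasDerivAt (hqp : QuasiPositive f) (hf : LipschitzWith K f)
    {v : ℝ → EuclideanSpace ℝ ι} (hv : ∀ t, 0 ≤ t → HasDerivAt v (f (v t)) t)
    (h0 : ∀ i, 0 ≤ v 0 i) {t : ℝ} (ht : 0 ≤ t) (i : ι) : 0 ≤ v t i := by
  have hE : ‖minZero (v t)‖ ^ 2 ≤ 0 := by
    refine le_zero_of_hasDerivAt_le_mul (K := 2 * K) (fun s hs => (hv s hs).norm_minZero_sq)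
      (fun s _ => ?_) (by simp [minZero_eq_zero_iff.2 h0]) ht
    linarith [hqp.inner_minZero_le hf (v s)]
  have hzero : minZero (v t) = 0 := by
    simpa using le_antisymm hE (sq_nonneg _)
  exact minZero_eq_zero_iff.1 hzero i

end QuasiPositive

end Orthant

section csDrift

variable (rreq rdata rthink rbreak rreset : ℝ)

theorem abs_csDrift_apply_sub_le (x y : EuclideanSpace ℝ (Fin 6)) (i : Fin 6) :
    |csDrift rreq rdata rthink rbreak rreset x i - csDrift rreq rdata rthink rbreak rreset y i|
      ≤ (|rreq| + |rdata| + |rthink| + |rbreak| + |rreset|) * ‖x - y‖ := by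
  set δ := ‖x - y‖
  have hδ : 0 ≤ δ := norm_nonneg _
  have hx (j : Fin 6) : |x j - y j| ≤ δ := by simpa using PiLp.norm_apply_le (x - y) j
  have hmin (j k : Fin 6) : |min (x j) (x k) - min (y j) (y k)| ≤ δ :=
    (abs_min_sub_min_le_max _ _ _ _).trans (max_le (hx j) (hx k))
  -- each rate multiplies exactly one of these five Lipschitz quantities
  have hreq := abs_le.1 (abs_mul_sub_mul_le rreq (hmin 0 3))
  have hdata := abs_le.1 (abs_mul_sub_mul_le rdata (hmin 1 4))
  have hthink := abs_le.1 (abs_mul_sub_mul_le rthink (hx 2))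
  have hbreak := abs_le.1 (abs_mul_sub_mul_le rbreak (hx 3))
  have hreset := abs_le.1 (abs_mul_sub_mul_le rreset (hx 5))
  have := mul_nonneg (abs_nonneg rreq) hδ
  have := mul_nonneg (abs_nonneg rdata) hδ
  have := mul_nonneg (abs_nonneg rthink) hδ
  have := mul_nonneg (abs_nonneg rbreak) hδ
  have := mul_nonneg (abs_nonneg rreset) hδ
  rw [abs_le]
  fin_cases i <;> simp [csDrift] <;> constructor <;> linarith

theorem lipschitzWith_csDrift :
    LipschitzWith (√6 * (|rreq| + |rdata| + |rthink| + |rbreak| + |rreset|)).toNNReal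
      (csDrift rreq rdata rthink rbreak rreset) := by
  refine lipschitzWith_iff_norm_sub_le.2 fun x y => ?_
  rw [Real.coe_toNNReal _ (by positivity), mul_assoc]
  refine (EuclideanSpace.norm_le_sqrt_card_mul ?_
    (abs_csDrift_apply_sub_le rreq rdata rthink rbreak rreset x y)).trans_eq ?_
  · positivity
  · simp

end csDrift

theorem quasiPositive_csDrift {rreq rdata rthink rbreak rreset : ℝ}
    (hreq : 0 ≤ rreq) (hdata : 0 ≤ rdata) (hthink : 0 ≤ rthink)
    (hbreak : 0 ≤ rbreak) (hreset : 0 ≤ rreset) :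
    QuasiPositive (csDrift rreq rdata rthink rbreak rreset) := by
  intro x hx i hi
  fin_cases i <;> simp_all [csDrift]
  exacts [mul_nonneg hthink (hx 2), mul_nonneg hreq (le_min (hx 0) (hx 3)),
    mul_nonneg hdata (le_min (hx 1) (hx 4)),
    add_nonneg (mul_nonneg hdata (le_min (hx 1) (hx 4))) (mul_nonneg hreset (hx 5)),
    mul_nonneg hreq (le_min (hx 0) (hx 3)), mul_nonneg hbreak (hx 3)]

/-- The nonnegative orthant is forward invariant for the client/server fluid
approximation: if all coordinates start nonnegative they stay nonnegative. -/
theorem csDrift_nonneg_invariant (rreq rdata rthink rbreak rreset : ℝ)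
    (hreq : 0 ≤ rreq) (hdata : 0 ≤ rdata) (hthink : 0 ≤ rthink)
    (hbreak : 0 ≤ rbreak) (hreset : 0 ≤ rreset)
    (v : ℝ → EuclideanSpace ℝ (Fin 6))
    (hv : ∀ t : ℝ, 0 ≤ t →
      HasDerivAt v (csDrift rreq rdata rthink rbreak rreset (v t)) t)
    (h0 : ∀ i : Fin 6, 0 ≤ v 0 i) :
    ∀ t : ℝ, 0 ≤ t → ∀ i : Fin 6, 0 ≤ v t i :=
  fun _ ht => (quasiPositive_csDrift hreq hdata hthink hbreak hreset).apply_nonneg_of_hasDerivAt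
    (lipschitzWith_csDrift rreq rdata rthink rbreak rreset) hv h0 ht
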